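/- Define h(p,q) = d_B(1-q ‖ p) / (-log p) for p,q ∈ (0,1), where d_B(a‖b) = a·log(a/b) + (1-a)·log((1-a)/(1-b)) is the binary KL divergence. Then h(p,q) tends to 1 as (p,q) → (0,0). -/

import Mathlib

/-!
In the ratio the base of the logarithm cancels, and in nats
`d_B(1-q ‖ p) = -(1-q) log p - H(q) - q log(1-p)` with `H` the binary entropy. Dividing by
`-log p → ∞` leaves `1 - q` plus a remainder that vanishes, because `H(q) → 0` and
`q log(1-p) → 0`.
-/

/-- Binary KL divergence `d_B(a‖b)` with base-2 logarithms. -/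
noncomputable def binKL (a b : ℝ) : ℝ :=
  a * Real.logb 2 (a / b) + (1 - a) * Real.logb 2 ((1 - a) / (1 - b))

open Filter Set Real Topology

lemma binKL_div_neg_logb (a b : ℝ) :
    binKL a b / -logb 2 b =
      (a * log (a / b) + (1 - a) * log ((1 - a) / (1 - b))) / -log b := by
  have h2 : log 2 ≠ 0 := by positivity
  simp only [binKL, logb, ← mul_div_assoc, ← add_div, ← neg_div]
  exact div_div_div_cancel_right₀ h2 _ _

lemma mul_log_one_sub_div_add_mul_log_div_one_sub {p q : ℝ} (hp₀ : 0 < p) (hp₁ : p < 1)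
    (hq₀ : 0 < q) (hq₁ : q < 1) :
    (1 - q) * log ((1 - q) / p) + (1 - (1 - q)) * log ((1 - (1 - q)) / (1 - p)) =
      -((1 - q) * log p) - (binEntropy q + q * log (1 - p)) := by
  rw [sub_sub_cancel, log_div (by linarith) hp₀.ne', log_div hq₀.ne' (by linarith), binEntropy,
    log_inv, log_inv]
  ring

lemma binKL_one_sub_div_neg_logb {p q : ℝ} (hp₀ : 0 < p) (hp₁ : p < 1)
    (hq₀ : 0 < q) (hq₁ : q < 1) :
    binKL (1 - q) p / -logb 2 p = 1 - q + (binEntropy q + q * log (1 - p)) / log p := by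
  have hlog : log p ≠ 0 := (log_neg hp₀ hp₁).ne
  rw [binKL_div_neg_logb, mul_log_one_sub_div_add_mul_log_div_one_sub hp₀ hp₁ hq₀ hq₁]
  field_simp
  ring

lemma tendsto_log_one_sub_nhds_zero : Tendsto (fun x : ℝ => log (1 - x)) (𝓝 0) (𝓝 0) := by
  have hcont : ContinuousAt (fun x : ℝ => log (1 - x)) 0 :=
    (continuousAt_const.sub continuousAt_id).log (by norm_num)
  simpa using hcont.tendsto

/-- `h(p,q) = d_B(1-q ‖ p) / (-log p)` tends to `1` as `(p,q) → (0,0)`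
within `(0,1) × (0,1)`. -/
theorem stmt0 :
    Filter.Tendsto
      (fun pq : ℝ × ℝ => binKL (1 - pq.2) pq.1 / (-Real.logb 2 pq.1))
      (nhdsWithin ((0 : ℝ), (0 : ℝ)) (Set.Ioo (0:ℝ) 1 ×ˢ Set.Ioo (0:ℝ) 1))
      (nhds 1) := by
  rw [nhdsWithin_prod_eq]
  have hp : Tendsto (fun pq : ℝ × ℝ => pq.1) (𝓝[Ioo 0 1] 0 ×ˢ 𝓝[Ioo 0 1] 0) (𝓝[>] 0) :=
    tendsto_fst.mono_right (nhdsWithin_mono _ Ioo_subset_Ioi_self)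
  have hq : Tendsto (fun pq : ℝ × ℝ => pq.2) (𝓝[Ioo 0 1] 0 ×ˢ 𝓝[Ioo 0 1] 0) (𝓝 0) :=
    tendsto_snd.mono_right nhdsWithin_le_nhds
  have hlog_one_sub : Tendsto (fun pq : ℝ × ℝ => log (1 - pq.1))
      (𝓝[Ioo 0 1] 0 ×ˢ 𝓝[Ioo 0 1] 0) (𝓝 0) :=
    tendsto_log_one_sub_nhds_zero.comp (hp.mono_right nhdsWithin_le_nhds)
  have hremainder : Tendsto (fun pq : ℝ × ℝ => binEntropy pq.2 + pq.2 * log (1 - pq.1))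
      (𝓝[Ioo 0 1] 0 ×ˢ 𝓝[Ioo 0 1] 0) (𝓝 0) := by
    simpa using ((binEntropy_continuous.tendsto 0).comp hq).add (hq.mul hlog_one_sub)
  have hlim := ((tendsto_const_nhds (x := (1 : ℝ))).sub hq).add
    (hremainder.div_atBot (tendsto_log_nhdsGT_zero.comp hp))
  simp only [sub_zero, add_zero] at hlim
  refine hlim.congr' ?_
  filter_upwards [prod_mem_prod self_mem_nhdsWithin self_mem_nhdsWithin]
    with ⟨p, q⟩ ⟨⟨hp₀, hp₁⟩, hq₀, hq₁⟩
  exact (binKL_one_sub_div_neg_logb hp₀ hp₁ hq₀ hq₁).symm
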